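/- Let α > 1/2 and define Φ_α(n₁,n₂,n₃,n₄) = |n₁|^{2α} - |n₂|^{2α} + |n₃|^{2α} - |n₄|^{2α} for integers nⱼ. If n₄ = n₁ - n₂ + n₃ and {n₁,n₃} ≠ {n₂,n₄} (equivalently n₄ ≠ n₁ and n₄ ≠ n₃), then there is a constant c = c(α) > 0 such that |Φ_α(n₁,n₂,n₃,n₄)| ≥ c |n₄-n₁| |n₄-n₃| (max(|n₁|,|n₂|,|n₃|,|n₄|)+1)^{2α-2}. -/

import Mathlib

noncomputable def PhiAlpha (α : ℝ) (n₁ n₂ n₃ n₄ : ℤ) : ℝ :=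
  (|(n₁ : ℝ)|) ^ (2 * α) - (|(n₂ : ℝ)|) ^ (2 * α)
    + (|(n₃ : ℝ)|) ^ (2 * α) - (|(n₄ : ℝ)|) ^ (2 * α)

open Real Set

noncomputable def psi (p x : ℝ) : ℝ := p * x * |x| ^ (p - 2)

lemma psi_neg (p x : ℝ) : psi p (-x) = - psi p x := by
  simp only [psi, abs_neg]; ring

lemma psi_of_nonneg {p : ℝ} (hp : 1 < p) {x : ℝ} (hx : 0 ≤ x) :
    psi p x = p * x ^ (p - 1) := by
  rcases hx.eq_or_lt with h | h
  · simp [psi, ← h, Real.zero_rpow (show p - 1 ≠ 0 by intro h; linarith)]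
  · rw [psi, abs_of_pos h, show p - 1 = (p - 2) + 1 by ring, Real.rpow_add h, Real.rpow_one]
    ring

lemma hasDerivAt_phi {p : ℝ} (hp : 1 < p) (x : ℝ) :
    HasDerivAt (fun y : ℝ => |y| ^ p) (psi p x) x := by
  rcases lt_trichotomy x 0 with hx | rfl | hx
  · have h0 : HasDerivAt (fun z : ℝ => z ^ p) (p * (-x) ^ (p - 1)) (-x) :=
      Real.hasDerivAt_rpow_const (Or.inl (by linarith))
    have h1 : HasDerivAt (fun y : ℝ => (-y) ^ p) (p * (-x) ^ (p - 1) * (-1)) x :=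
      h0.comp x ((hasDerivAt_id x).neg)
    have h2 : (fun y : ℝ => |y| ^ p) =ᶠ[nhds x] (fun y : ℝ => (-y) ^ p) := by
      filter_upwards [Iio_mem_nhds hx] with y hy
      rw [abs_of_neg hy]
    have h3 : psi p x = p * (-x) ^ (p - 1) * (-1) := by
      have := psi_of_nonneg hp (show (0:ℝ) ≤ -x by linarith)
      have h4 : psi p (-x) = - psi p x := psi_neg p x
      rw [h4] at this; linarith
    rw [h3]
    exact h1.congr_of_eventuallyEq h2
  · have hpsi0 : psi p 0 = 0 := by simp [psi]
    rw [hpsi0, hasDerivAt_iff_tendsto_slope]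
    apply squeeze_zero_norm' (a := fun y : ℝ => |y| ^ (p - 1))
    · filter_upwards [self_mem_nhdsWithin] with y hy
      have hy0 : y ≠ 0 := hy
      have hs : slope (fun y : ℝ => |y| ^ p) 0 y = |y| ^ p / y := by
        simp [slope_def_field, Real.zero_rpow (show p ≠ 0 by linarith), div_eq_mul_inv]
      rw [hs, Real.norm_eq_abs]
      have hay : (0:ℝ) < |y| := abs_pos.mpr hy0
      rw [abs_div, abs_of_nonneg (Real.rpow_nonneg (abs_nonneg y) p)]
      rw [show |y| ^ p = |y| ^ ((p-1) + 1) by norm_num, Real.rpow_add hay, Real.rpow_one, mul_div_assoc,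
        div_self (ne_of_gt hay), mul_one]
    · have hc : ContinuousAt (fun t : ℝ => t ^ (p - 1)) 0 :=
        Real.continuousAt_rpow_const 0 (p - 1) (Or.inr (by linarith))
      have hc' : ContinuousAt (fun t : ℝ => t ^ (p - 1)) |0| := by simpa using hc
      have hcomp := hc'.comp (continuous_abs.continuousAt (x := (0:ℝ)))
      have h0 : ((fun t : ℝ => t ^ (p-1)) ∘ abs) 0 = 0 := by
        simp [Real.zero_rpow (show p - 1 ≠ 0 by intro h; linarith)]
      rw [ContinuousAt, h0] at hcomp
      exact hcomp.mono_left nhdsWithin_le_nhds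
  · have h0 : HasDerivAt (fun z : ℝ => z ^ p) (p * x ^ (p - 1)) x :=
      Real.hasDerivAt_rpow_const (Or.inl (by linarith))
    have h2 : (fun y : ℝ => |y| ^ p) =ᶠ[nhds x] (fun y : ℝ => y ^ p) := by
      filter_upwards [Ioi_mem_nhds hx] with y hy
      rw [abs_of_pos hy]
    rw [psi_of_nonneg hp hx.le]
    exact h0.congr_of_eventuallyEq h2

lemma rpow_split {p : ℝ} (hp : 1 < p) {x : ℝ} (hx : 0 ≤ x) :
    x ^ (p - 1) = x * x ^ (p - 2) := by
  rcases hx.eq_or_lt with h | h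
  · rw [← h, Real.zero_rpow (show p - 1 ≠ 0 by intro h; linarith), zero_mul]
  · rw [show p - 1 = (p - 2) + 1 by ring, Real.rpow_add h, Real.rpow_one]; ring

lemma S1 {p : ℝ} (hp : 1 < p) {a b : ℝ} (ha : 0 ≤ a) (hab : a < b) :
    min 1 (p - 1) * ((b - a) * b ^ (p - 2)) ≤ b ^ (p - 1) - a ^ (p - 1) := by
  have hb : 0 < b := lt_of_le_of_lt ha hab
  have hB : 0 ≤ b ^ (p - 2) := Real.rpow_nonneg hb.le _
  rcases le_or_gt 2 p with h2 | h2
  · -- p ≥ 2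
    have e1 : b ^ (p - 1) = b * b ^ (p - 2) := rpow_split hp hb.le
    have e2 : a ^ (p - 1) = a * a ^ (p - 2) := rpow_split hp ha
    have h3 : a ^ (p - 2) ≤ b ^ (p - 2) := Real.rpow_le_rpow ha hab.le (by linarith)
    have h4 : a * a ^ (p - 2) ≤ a * b ^ (p - 2) := mul_le_mul_of_nonneg_left h3 ha
    have hmin : min 1 (p - 1) ≤ 1 := min_le_left _ _
    have hmin0 : 0 ≤ min 1 (p - 1) := le_min (by norm_num) (by linarith)
    nlinarith [mul_le_mul_of_nonneg_right hmin (mul_nonneg (by linarith : (0:ℝ) ≤ b - a) hB)]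
  · -- 1 < p < 2 : MVT
    obtain ⟨ξ, hξ, heq⟩ := exists_hasDerivAt_eq_slope (fun x => x ^ (p - 1))
      (fun x => (p - 1) * x ^ (p - 2)) hab
      (fun x _ => (Real.continuousAt_rpow_const x (p - 1)
        (Or.inr (by linarith))).continuousWithinAt)
      (fun x hx => by
        have hx0 : x ≠ 0 := by have : 0 < x := lt_of_le_of_lt ha hx.1; linarith
        have := Real.hasDerivAt_rpow_const (x := x) (p := p - 1) (Or.inl hx0)
        simpa [show p - 1 - 1 = p - 2 by ring] using this)
    have hξ0 : 0 < ξ := lt_of_le_of_lt ha hξ.1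
    have h5 : b ^ (p - 2) ≤ ξ ^ (p - 2) :=
      Real.rpow_le_rpow_of_nonpos hξ0 hξ.2.le (by linarith)
    rw [eq_div_iff (show b - a ≠ 0 by intro h; linarith [hab] )] at heq
    -- heq : (p-1) * ξ ^ (p-2) * (b - a) = b^(p-1) - a^(p-1)
    have hmin : min 1 (p - 1) ≤ p - 1 := min_le_right _ _
    have hBB : 0 ≤ (b - a) * b ^ (p - 2) := mul_nonneg (by linarith) hB
    nlinarith [mul_le_mul_of_nonneg_left h5 (show (0:ℝ) ≤ (p-1) * (b-a) by nlinarith),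
      mul_le_mul_of_nonneg_right hmin hBB]

lemma key_nonneg {p : ℝ} (hp : 1 < p) {a b : ℝ} (ha : 0 ≤ a) (hab : a < b) :
    p * min (min 1 (p - 1)) (1/2) * ((b - a) * (max |a| |b|) ^ (p - 2))
      ≤ psi p b - psi p a := by
  have hp0 : 0 < p := by linarith
  have hc1 : min (min 1 (p - 1)) (1/2) ≤ min 1 (p - 1) := min_le_left _ _
  have hb : 0 < b := lt_of_le_of_lt ha hab
  have hM : max |a| |b| = b := by
    rw [abs_of_nonneg ha, abs_of_nonneg hb.le]; exact max_eq_right hab.le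
  rw [hM, psi_of_nonneg hp ha, psi_of_nonneg hp hb.le]
  have hS := S1 hp ha hab
  have hB : 0 ≤ (b - a) * b ^ (p - 2) :=
    mul_nonneg (by linarith) (Real.rpow_nonneg hb.le _)
  nlinarith [mul_le_mul_of_nonneg_right hc1 hB]

lemma key {p : ℝ} (hp : 1 < p) {a b : ℝ} (hab : a < b) :
    p * min (min 1 (p - 1)) (1/2) * ((b - a) * (max |a| |b|) ^ (p - 2))
      ≤ psi p b - psi p a := by
  have hp0 : 0 < p := by linarith
  have hc2 : min (min 1 (p - 1)) (1/2) ≤ 1/2 := min_le_right _ _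
  have hc0 : 0 < min (min 1 (p - 1)) (1/2) := by
    apply lt_min (lt_min (by norm_num) (by linarith)) (by norm_num)
  rcases le_or_gt 0 a with ha | ha
  · exact key_nonneg hp ha hab
  · rcases le_or_gt b 0 with hb | hb
    · -- a < b ≤ 0
      have h1 : (0:ℝ) ≤ -b := by linarith
      have h2 : -b < -a := by linarith
      have hkey := key_nonneg hp h1 h2
      have hM : max |(-b)| |(-a)| = max |a| |b| := by
        rw [abs_neg, abs_neg, max_comm]
      rw [hM, psi_neg, psi_neg] at hkey
      have he : -a - -b = b - a := by ring
      rw [he] at hkey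
      linarith
    · -- a < 0 < b
      have hM0 : 0 < max |a| |b| := lt_of_lt_of_le (abs_pos.mpr (ne_of_gt hb)) (le_max_right _ _)
      have e1 : psi p b = p * b ^ (p - 1) := psi_of_nonneg hp hb.le
      have e2 : psi p a = -(p * (-a) ^ (p - 1)) := by
        have := psi_of_nonneg hp (show (0:ℝ) ≤ -a by linarith)
        have h4 : psi p (-a) = - psi p a := psi_neg p a
        rw [h4] at this; linarith
      have h2 : (max |a| |b|) ^ (p - 1) ≤ b ^ (p - 1) + (-a) ^ (p - 1) := by
        rcases le_total |a| |b| with h | h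
        · rw [max_eq_right h, abs_of_pos hb]
          have : (0:ℝ) ≤ (-a) ^ (p-1) := Real.rpow_nonneg (by linarith) _
          linarith
        · rw [max_eq_left h, abs_of_neg ha]
          have : (0:ℝ) ≤ b ^ (p-1) := Real.rpow_nonneg (by linarith) _
          linarith
      have h3 : (max |a| |b|) ^ (p - 1) = (max |a| |b|) * (max |a| |b|) ^ (p - 2) :=
        rpow_split hp hM0.le
      have h4 : b - a ≤ 2 * max |a| |b| := by
        have hb' : b ≤ max |a| |b| := le_trans (le_abs_self b) (le_max_right _ _)
        have ha' : -a ≤ max |a| |b| := le_trans (neg_le_abs a) (le_max_left _ _)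
        linarith
      have hB : 0 ≤ (max |a| |b|) ^ (p - 2) := Real.rpow_nonneg hM0.le _
      rw [e1, e2]
      nlinarith [mul_le_mul_of_nonneg_right h4 hB,
        mul_le_mul_of_nonneg_right hc2 (mul_nonneg (by linarith : (0:ℝ) ≤ b - a) hB)]

lemma bridge {p : ℝ} (hp : 1 < p) (b cc d u v L m : ℝ)
    (hm : 0 < m) (hb : b = cc - m) (hcc : cc ≤ u) (huv : u < v) (hvd : v ≤ d)
    (hL : ∀ ξ ∈ Set.Ioo u v, L ≤ (max |ξ - m| |ξ|) ^ (p - 2)) (hL0 : 0 ≤ L) :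
    p * min (min 1 (p - 1)) (1/2) * (m * ((v - u) * L))
      ≤ (|d| ^ p - |d - m| ^ p) - (|cc| ^ p - |b| ^ p) := by
  have hp0 : 0 < p := by linarith
  have hcnn : (0:ℝ) ≤ min (min 1 (p - 1)) (1/2) :=
    le_min (le_min zero_le_one (by linarith)) (by norm_num)
  have hD : ∀ x, HasDerivAt (fun x : ℝ => |x| ^ p - |x - m| ^ p)
      (psi p x - psi p (x - m)) x := by
    intro x
    have h1 := hasDerivAt_phi hp x
    have h2 := (hasDerivAt_phi hp (x - m)).comp x ((hasDerivAt_id x).sub_const m)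
    rw [mul_one] at h2
    exact h1.sub h2
  have hdiffnn : ∀ x : ℝ, 0 ≤ psi p x - psi p (x - m) := by
    intro x
    have hk := key hp (show x - m < x by linarith)
    have h0 : 0 ≤ p * min (min 1 (p - 1)) (1/2) *
        ((x - (x - m)) * (max |x - m| |x|) ^ (p - 2)) := by
      apply mul_nonneg (mul_nonneg hp0.le hcnn)
      apply mul_nonneg (by linarith) (Real.rpow_nonneg (le_max_of_le_right (abs_nonneg x)) _)
    linarith
  have hmono : Monotone (fun x : ℝ => |x| ^ p - |x - m| ^ p) :=
    monotone_of_deriv_nonneg (fun x => (hD x).differentiableAt)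
      (fun x => by rw [(hD x).deriv]; exact hdiffnn x)
  obtain ⟨ξ, hξ, heq⟩ := exists_hasDerivAt_eq_slope (fun x : ℝ => |x| ^ p - |x - m| ^ p)
    (fun x => psi p x - psi p (x - m)) huv
    (fun x _ => (hD x).continuousAt.continuousWithinAt) (fun x _ => hD x)
  rw [eq_div_iff (ne_of_gt (sub_pos.mpr huv))] at heq
  have hk := key hp (show ξ - m < ξ by linarith)
  rw [show ξ - (ξ - m) = m by ring] at hk
  have hLM := hL ξ hξ
  have hstep : p * min (min 1 (p - 1)) (1/2) * (m * L) ≤ psi p ξ - psi p (ξ - m) := by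
    have h1 := mul_le_mul_of_nonneg_left hLM
      (mul_nonneg (mul_nonneg hp0.le hcnn) hm.le)
    nlinarith [hk]
  have h1 : |cc| ^ p - |cc - m| ^ p ≤ |u| ^ p - |u - m| ^ p := hmono hcc
  have h2 : |v| ^ p - |v - m| ^ p ≤ |d| ^ p - |d - m| ^ p := hmono hvd
  have h3 := mul_le_mul_of_nonneg_left hstep (sub_pos.mpr huv).le
  have hb' : |cc - m| ^ p = |b| ^ p := by rw [hb]
  nlinarith [heq, h1, h2, h3, hb']

lemma core {p : ℝ} (hp : 1 < p) :
    ∃ c > 0, ∀ a b cc d : ℝ, b = a + cc - d → 0 < d - a → d - a ≤ d - cc →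
      1 ≤ max (max |a| |b|) (max |cc| |d|) →
      c * ((d - a) * ((d - cc) * (max (max |a| |b|) (max |cc| |d|) + 1) ^ (p - 2)))
        ≤ (|d| ^ p - |a| ^ p) - (|cc| ^ p - |b| ^ p) := by
  have hp0 : 0 < p := by linarith
  have hc₀0 : 0 < p * min (min 1 (p - 1)) (1/2) :=
    mul_pos hp0 (lt_min (lt_min one_pos (by linarith)) (by norm_num))
  rcases le_or_gt p 2 with hp2 | hp2
  · -- 1 < p ≤ 2
    refine ⟨p * min (min 1 (p - 1)) (1/2), hc₀0, ?_⟩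
    intro a b cc d hbcon hm hmk hN
    set N := max (max |a| |b|) (max |cc| |d|) with hNdef
    clear_value N
    have hk : 0 < d - cc := lt_of_lt_of_le hm hmk
    have hL : ∀ ξ ∈ Set.Ioo cc d, ((N:ℝ) + 1) ^ (p - 2) ≤ (max |ξ - (d - a)| |ξ|) ^ (p - 2) := by
      intro ξ hξ
      have hMN : max |ξ - (d - a)| |ξ| ≤ N := by
        apply max_le
        · have e1 : cc - (d - a) ≤ ξ - (d - a) := by linarith [hξ.1]
          have e2 : ξ - (d - a) ≤ d - (d - a) := by linarith [hξ.2]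
          have h3 := abs_le_max_abs_abs e1 e2
          rw [show d - (d - a) = a by ring, show cc - (d - a) = b by linarith] at h3
          refine le_trans h3 (max_le ?_ ?_)
          · rw [hNdef]; exact le_trans (le_max_right _ _) (le_max_left _ _)
          · rw [hNdef]; exact le_trans (le_max_left _ _) (le_max_left _ _)
        · have h3 := abs_le_max_abs_abs hξ.1.le hξ.2.le
          refine le_trans h3 (max_le ?_ ?_)
          · rw [hNdef]; exact le_trans (le_max_left _ _) (le_max_right _ _)
          · rw [hNdef]; exact le_trans (le_max_right _ _) (le_max_right _ _)
      have hM0 : 0 < max |ξ - (d - a)| |ξ| := by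
        have t1 : ξ ≤ |ξ| := le_abs_self ξ
        have t2 : -(ξ - (d - a)) ≤ |ξ - (d - a)| := neg_le_abs _
        have t3 : |ξ| ≤ max |ξ - (d - a)| |ξ| := le_max_right _ _
        have t4 : |ξ - (d - a)| ≤ max |ξ - (d - a)| |ξ| := le_max_left _ _
        linarith
      exact Real.rpow_le_rpow_of_nonpos hM0 (by linarith) (by linarith)
    have hbr := bridge hp b cc d cc d ((N + 1) ^ (p - 2)) (d - a) hm (by linarith) le_rfl
      (by linarith) le_rfl hL (Real.rpow_nonneg (by linarith) _)
    rw [show d - (d - a) = a by ring] at hbr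
    exact hbr
  · -- 2 < p
    have h96 : (0:ℝ) < (96:ℝ) ^ (p - 2) := Real.rpow_pos_of_pos (by norm_num) _
    refine ⟨3/8 * (p * min (min 1 (p - 1)) (1/2)) / (96:ℝ) ^ (p - 2),
      by positivity, ?_⟩
    intro a b cc d hbcon hm hmk hN
    set N := max (max |a| |b|) (max |cc| |d|) with hNdef
    clear_value N
    have hk : 0 < d - cc := lt_of_lt_of_le hm hmk
    have hN96 : (N + 1) / 96 ≤ N / 48 := by linarith
    have hi : (0:ℝ) ≤ ((96:ℝ) ^ (p - 2))⁻¹ := inv_nonneg.mpr h96.le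
    have e2 : (((N:ℝ) + 1) / 96) ^ (p - 2)
        = (N + 1) ^ (p - 2) * ((96:ℝ) ^ (p - 2))⁻¹ := by
      rw [Real.div_rpow (by linarith) (by norm_num), div_eq_mul_inv]
    have hL0 : (0:ℝ) ≤ ((N + 1) / 96) ^ (p - 2) := Real.rpow_nonneg (by linarith) _
    -- produce a good subinterval [u, v]
    have hsub : ∃ u v : ℝ, cc ≤ u ∧ u < v ∧ v ≤ d ∧ 3/8 * (d - cc) ≤ v - u ∧
        ∀ ξ ∈ Set.Ioo u v, (N + 1) / 96 ≤ max |ξ - (d - a)| |ξ| := by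
      by_cases hA : (d - a) + 2 * (d - cc) ≤ N / 2
      · refine ⟨cc, d, le_rfl, by linarith, le_rfl, by linarith, ?_⟩
        intro ξ hξ
        have hd_bound : N ≤ |d| + ((d - a) + (d - cc)) := by
          rw [hNdef]
          apply max_le (max_le ?_ ?_) (max_le ?_ ?_)
          · have h1 := abs_sub_abs_le_abs_sub a d
            have h2 : |a - d| = d - a := by
              rw [abs_sub_comm]; exact abs_of_pos hm
            linarith
          · have h1 := abs_sub_abs_le_abs_sub b d
            have h2 : |b - d| = (d - a) + (d - cc) := by
              rw [show b - d = -((d - a) + (d - cc)) by rw [hbcon]; ring, abs_neg]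
              exact abs_of_pos (by linarith)
            linarith
          · have h1 := abs_sub_abs_le_abs_sub cc d
            have h2 : |cc - d| = d - cc := by
              rw [abs_sub_comm]; exact abs_of_pos hk
            linarith
          · linarith [abs_nonneg d]
        have h1 := abs_sub_abs_le_abs_sub d ξ
        have h2 : |d - ξ| = d - ξ := abs_of_pos (by linarith [hξ.2])
        have h3 : d - ξ ≤ d - cc := by linarith [hξ.1]
        have h4 : (N + 1) / 96 ≤ |ξ| := by linarith
        exact le_trans h4 (le_max_right _ _)
      · -- k is big
        have hkN : N < 6 * (d - cc) := by linarith
        have hδk : 8 * (N / 48) ≤ d - cc := by linarith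
        have hδ0 : 0 < N / 48 := by linarith
        rcases le_or_gt ((cc + d) / 2) 0 with hmid | hmid
        · refine ⟨cc, min ((cc + d) / 2) (-(N / 48)), le_rfl, ?_, ?_, ?_, ?_⟩
          · rcases le_total ((cc + d) / 2) (-(N / 48)) with h | h
            · rw [min_eq_left h]; linarith
            · rw [min_eq_right h]; linarith
          · exact le_trans (min_le_left _ _) (by linarith)
          · rcases le_total ((cc + d) / 2) (-(N / 48)) with h | h
            · rw [min_eq_left h]; linarith
            · rw [min_eq_right h]; linarith
          · intro ξ hξ
            have h1 : ξ < -(N / 48) := lt_of_lt_of_le hξ.2 (min_le_right _ _)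
            have h2 : (N + 1) / 96 ≤ -ξ := by linarith
            exact le_trans (le_trans h2 (neg_le_abs ξ)) (le_max_right _ _)
        · refine ⟨max ((cc + d) / 2) (N / 48), d, ?_, ?_, le_rfl, ?_, ?_⟩
          · exact le_trans (by linarith) (le_max_left _ _)
          · rcases le_total (N / 48) ((cc + d) / 2) with h | h
            · rw [max_eq_left h]; linarith
            · rw [max_eq_right h]; linarith
          · rcases le_total (N / 48) ((cc + d) / 2) with h | h
            · rw [max_eq_left h]; linarith
            · rw [max_eq_right h]; linarith
          · intro ξ hξ
            have h1 : N / 48 < ξ := lt_of_le_of_lt (le_max_right _ _) hξ.1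
            have h2 : (N + 1) / 96 ≤ ξ := by linarith
            exact le_trans (le_trans h2 (le_abs_self ξ)) (le_max_right _ _)
    obtain ⟨u, v, hcu, huv, hvd, hlen, hgood⟩ := hsub
    have hL : ∀ ξ ∈ Set.Ioo u v,
        (((N:ℝ) + 1) / 96) ^ (p - 2) ≤ (max |ξ - (d - a)| |ξ|) ^ (p - 2) := by
      intro ξ hξ
      exact Real.rpow_le_rpow (by linarith) (hgood ξ hξ) (by linarith)
    have hbr := bridge hp b cc d u v (((N + 1) / 96) ^ (p - 2)) (d - a) hm
      (by linarith) hcu huv hvd hL hL0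
    rw [show d - (d - a) = a by ring] at hbr
    have hmono : 3/8 * (p * min (min 1 (p - 1)) (1/2)) / (96:ℝ) ^ (p - 2)
        * ((d - a) * ((d - cc) * (N + 1) ^ (p - 2)))
        ≤ p * min (min 1 (p - 1)) (1/2) * ((d - a) * ((v - u) * ((N + 1) / 96) ^ (p - 2))) := by
      have hnn1 : (0:ℝ) ≤ (N + 1) ^ (p - 2) := Real.rpow_nonneg (by linarith) _
      have step1 : 3/8 * (p * min (min 1 (p - 1)) (1/2)) / (96:ℝ) ^ (p - 2)
          * ((d - a) * ((d - cc) * (N + 1) ^ (p - 2)))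
          = p * min (min 1 (p - 1)) (1/2) * ((d - a) * ((3/8 * (d - cc)) * ((N + 1) / 96) ^ (p - 2))) := by
        rw [e2, div_eq_mul_inv]; ring
      rw [step1]
      apply mul_le_mul_of_nonneg_left _ hc₀0.le
      apply mul_le_mul_of_nonneg_left _ hm.le
      exact mul_le_mul_of_nonneg_right hlen hL0
    exact le_trans hmono hbr

lemma max_sh13 (x1 x2 x3 x4 : ℝ) :
    max (max x3 x2) (max x1 x4) = max (max x1 x2) (max x3 x4) := by
  simp [max_comm, max_left_comm, max_assoc]

lemma max_shin (x1 x2 x3 x4 : ℝ) :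
    max (max x2 x1) (max x4 x3) = max (max x1 x2) (max x3 x4) := by
  simp [max_comm, max_left_comm, max_assoc]

lemma max_shrev (x1 x2 x3 x4 : ℝ) :
    max (max x4 x3) (max x2 x1) = max (max x1 x2) (max x3 x4) := by
  simp [max_comm, max_left_comm, max_assoc]

lemma max_shpair (x1 x2 x3 x4 : ℝ) :
    max (max x3 x4) (max x1 x2) = max (max x1 x2) (max x3 x4) := by
  simp [max_comm, max_left_comm, max_assoc]

lemma core2 {p : ℝ} (hp : 1 < p) :
    ∃ c > 0, ∀ a b cc d : ℝ, b = a + cc - d → 0 < d - a → 0 < d - cc →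
      1 ≤ max (max |a| |b|) (max |cc| |d|) →
      c * ((d - a) * ((d - cc) * (max (max |a| |b|) (max |cc| |d|) + 1) ^ (p - 2)))
        ≤ (|d| ^ p - |a| ^ p) - (|cc| ^ p - |b| ^ p) := by
  obtain ⟨c, hc, H⟩ := core hp
  refine ⟨c, hc, ?_⟩
  intro a b cc d hbcon hm hk hN
  rcases le_total (d - a) (d - cc) with hmk | hmk
  · exact H a b cc d hbcon hm hmk hN
  · have e := max_sh13 |a| |b| |cc| |d|
    have h := H cc b a d (by linarith) hk hmk (by rw [e]; exact hN)
    rw [e] at h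
    linarith [h]

/-- For `α > 1/2` there is `c = c(α) > 0` such that for all integers with
`n₄ = n₁ - n₂ + n₃` and `n₄ ≠ n₁`, `n₄ ≠ n₃`,
`|Φ_α(n̄)| ≥ c |n₄-n₁| |n₄-n₃| (max(|n₁|,|n₂|,|n₃|,|n₄|)+1)^{2α-2}`. -/
theorem phase_lower_bound (α : ℝ) (hα : 1/2 < α) :
    ∃ c > 0, ∀ n₁ n₂ n₃ n₄ : ℤ, n₄ = n₁ - n₂ + n₃ → n₄ ≠ n₁ → n₄ ≠ n₃ →
      c * |((n₄ - n₁ : ℤ) : ℝ)| * |((n₄ - n₃ : ℤ) : ℝ)| *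
          (max (max (|(n₁ : ℝ)|) (|(n₂ : ℝ)|)) (max (|(n₃ : ℝ)|) (|(n₄ : ℝ)|)) + 1)
            ^ (2 * α - 2)
        ≤ |PhiAlpha α n₁ n₂ n₃ n₄| := by
  have hp : 1 < 2 * α := by linarith
  obtain ⟨c, hc, H⟩ := core2 hp
  refine ⟨c, hc, ?_⟩
  intro n₁ n₂ n₃ n₄ hcon h41 h43
  have hconR : (n₄:ℝ) = (n₁:ℝ) - n₂ + n₃ := by exact_mod_cast hcon
  have hNN : (1:ℝ) ≤ max (max |(n₁:ℝ)| |(n₂:ℝ)|) (max |(n₃:ℝ)| |(n₄:ℝ)|) := by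
    rcases eq_or_ne n₁ 0 with h1 | h1
    · have h4 : n₄ ≠ 0 := fun h => h41 (by rw [h, h1])
      have h5 : (1:ℝ) ≤ |(n₄:ℝ)| := by
        have := Int.one_le_abs h4
        calc (1:ℝ) ≤ ((|n₄| : ℤ) : ℝ) := by exact_mod_cast this
          _ = |(n₄:ℝ)| := by push_cast; ring
      exact le_trans h5 (le_trans (le_max_right _ _) (le_max_right _ _))
    · have h5 : (1:ℝ) ≤ |(n₁:ℝ)| := by
        have := Int.one_le_abs h1
        calc (1:ℝ) ≤ ((|n₁| : ℤ) : ℝ) := by exact_mod_cast this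
          _ = |(n₁:ℝ)| := by push_cast; ring
      exact le_trans h5 (le_trans (le_max_left _ _) (le_max_left _ _))
  have hm0 : n₄ - n₁ ≠ 0 := sub_ne_zero.mpr h41
  have hk0 : n₄ - n₃ ≠ 0 := sub_ne_zero.mpr h43
  have hmR0 : ((n₄ - n₁ : ℤ) : ℝ) ≠ 0 := by exact_mod_cast hm0
  have hkR0 : ((n₄ - n₃ : ℤ) : ℝ) ≠ 0 := by exact_mod_cast hk0
  rcases hmR0.lt_or_gt with hm | hm <;> rcases hkR0.lt_or_gt with hk | hk
  · -- m < 0, k < 0 : tuple (n₃, n₄, n₁, n₂)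
    have eA : |((n₄ - n₁ : ℤ) : ℝ)| = (n₂:ℝ) - (n₃:ℝ) := by
      rw [abs_of_neg hm]; push_cast; linarith
    have eB : |((n₄ - n₃ : ℤ) : ℝ)| = (n₂:ℝ) - (n₁:ℝ) := by
      rw [abs_of_neg hk]; push_cast; linarith
    have hmR : (0:ℝ) < (n₂:ℝ) - (n₃:ℝ) := by
      have : ((n₄ - n₁ : ℤ) : ℝ) < 0 := hm
      push_cast at this; linarith
    have hkR : (0:ℝ) < (n₂:ℝ) - (n₁:ℝ) := by
      have : ((n₄ - n₃ : ℤ) : ℝ) < 0 := hk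
      push_cast at this; linarith
    have e := max_shpair |(n₁:ℝ)| |(n₂:ℝ)| |(n₃:ℝ)| |(n₄:ℝ)|
    have h := H (n₃:ℝ) (n₄:ℝ) (n₁:ℝ) (n₂:ℝ) (by linarith) hmR hkR (by rw [e]; exact hNN)
    rw [e] at h
    calc c * |((n₄ - n₁ : ℤ) : ℝ)| * |((n₄ - n₃ : ℤ) : ℝ)| *
          (max (max |(n₁:ℝ)| |(n₂:ℝ)|) (max |(n₃:ℝ)| |(n₄:ℝ)|) + 1) ^ (2 * α - 2)
        = c * (((n₂:ℝ) - n₃) * (((n₂:ℝ) - n₁) *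
          (max (max |(n₁:ℝ)| |(n₂:ℝ)|) (max |(n₃:ℝ)| |(n₄:ℝ)|) + 1) ^ (2 * α - 2))) := by
          rw [eA, eB]; ring
      _ ≤ -(PhiAlpha α n₁ n₂ n₃ n₄) := by simp only [PhiAlpha]; linarith [h]
      _ ≤ |PhiAlpha α n₁ n₂ n₃ n₄| := neg_le_abs _
  · -- m < 0, k > 0 : tuple (n₄, n₃, n₂, n₁)
    have eA : |((n₄ - n₁ : ℤ) : ℝ)| = (n₁:ℝ) - (n₄:ℝ) := by
      rw [abs_of_neg hm]; push_cast; ring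
    have eB : |((n₄ - n₃ : ℤ) : ℝ)| = (n₁:ℝ) - (n₂:ℝ) := by
      rw [abs_of_pos hk]; push_cast; linarith
    have hmR : (0:ℝ) < (n₁:ℝ) - (n₄:ℝ) := by
      have : ((n₄ - n₁ : ℤ) : ℝ) < 0 := hm
      push_cast at this; linarith
    have hkR : (0:ℝ) < (n₁:ℝ) - (n₂:ℝ) := by
      have : (0:ℝ) < ((n₄ - n₃ : ℤ) : ℝ) := hk
      push_cast at this; linarith
    have e := max_shrev |(n₁:ℝ)| |(n₂:ℝ)| |(n₃:ℝ)| |(n₄:ℝ)|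
    have h := H (n₄:ℝ) (n₃:ℝ) (n₂:ℝ) (n₁:ℝ) (by linarith) hmR hkR (by rw [e]; exact hNN)
    rw [e] at h
    calc c * |((n₄ - n₁ : ℤ) : ℝ)| * |((n₄ - n₃ : ℤ) : ℝ)| *
          (max (max |(n₁:ℝ)| |(n₂:ℝ)|) (max |(n₃:ℝ)| |(n₄:ℝ)|) + 1) ^ (2 * α - 2)
        = c * (((n₁:ℝ) - n₄) * (((n₁:ℝ) - n₂) *
          (max (max |(n₁:ℝ)| |(n₂:ℝ)|) (max |(n₃:ℝ)| |(n₄:ℝ)|) + 1) ^ (2 * α - 2))) := by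
          rw [eA, eB]; ring
      _ ≤ PhiAlpha α n₁ n₂ n₃ n₄ := by simp only [PhiAlpha]; linarith [h]
      _ ≤ |PhiAlpha α n₁ n₂ n₃ n₄| := le_abs_self _
  · -- m > 0, k < 0 : tuple (n₂, n₁, n₄, n₃)
    have eA : |((n₄ - n₁ : ℤ) : ℝ)| = (n₃:ℝ) - (n₂:ℝ) := by
      rw [abs_of_pos hm]; push_cast; linarith
    have eB : |((n₄ - n₃ : ℤ) : ℝ)| = (n₃:ℝ) - (n₄:ℝ) := by
      rw [abs_of_neg hk]; push_cast; ring
    have hmR : (0:ℝ) < (n₃:ℝ) - (n₂:ℝ) := by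
      have : (0:ℝ) < ((n₄ - n₁ : ℤ) : ℝ) := hm
      push_cast at this; linarith
    have hkR : (0:ℝ) < (n₃:ℝ) - (n₄:ℝ) := by
      have : ((n₄ - n₃ : ℤ) : ℝ) < 0 := hk
      push_cast at this; linarith
    have e := max_shin |(n₁:ℝ)| |(n₂:ℝ)| |(n₃:ℝ)| |(n₄:ℝ)|
    have h := H (n₂:ℝ) (n₁:ℝ) (n₄:ℝ) (n₃:ℝ) (by linarith) hmR hkR (by rw [e]; exact hNN)
    rw [e] at h
    calc c * |((n₄ - n₁ : ℤ) : ℝ)| * |((n₄ - n₃ : ℤ) : ℝ)| *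
          (max (max |(n₁:ℝ)| |(n₂:ℝ)|) (max |(n₃:ℝ)| |(n₄:ℝ)|) + 1) ^ (2 * α - 2)
        = c * (((n₃:ℝ) - n₂) * (((n₃:ℝ) - n₄) *
          (max (max |(n₁:ℝ)| |(n₂:ℝ)|) (max |(n₃:ℝ)| |(n₄:ℝ)|) + 1) ^ (2 * α - 2))) := by
          rw [eA, eB]; ring
      _ ≤ PhiAlpha α n₁ n₂ n₃ n₄ := by simp only [PhiAlpha]; linarith [h]
      _ ≤ |PhiAlpha α n₁ n₂ n₃ n₄| := le_abs_self _
  · -- m > 0, k > 0 : tuple (n₁, n₂, n₃, n₄)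
    have eA : |((n₄ - n₁ : ℤ) : ℝ)| = (n₄:ℝ) - (n₁:ℝ) := by
      rw [abs_of_pos hm]; push_cast; ring
    have eB : |((n₄ - n₃ : ℤ) : ℝ)| = (n₄:ℝ) - (n₃:ℝ) := by
      rw [abs_of_pos hk]; push_cast; ring
    have hmR : (0:ℝ) < (n₄:ℝ) - (n₁:ℝ) := by
      have : (0:ℝ) < ((n₄ - n₁ : ℤ) : ℝ) := hm
      push_cast at this; linarith
    have hkR : (0:ℝ) < (n₄:ℝ) - (n₃:ℝ) := by
      have : (0:ℝ) < ((n₄ - n₃ : ℤ) : ℝ) := hk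
      push_cast at this; linarith
    have h := H (n₁:ℝ) (n₂:ℝ) (n₃:ℝ) (n₄:ℝ) (by linarith) hmR hkR hNN
    calc c * |((n₄ - n₁ : ℤ) : ℝ)| * |((n₄ - n₃ : ℤ) : ℝ)| *
          (max (max |(n₁:ℝ)| |(n₂:ℝ)|) (max |(n₃:ℝ)| |(n₄:ℝ)|) + 1) ^ (2 * α - 2)
        = c * (((n₄:ℝ) - n₁) * (((n₄:ℝ) - n₃) *
          (max (max |(n₁:ℝ)| |(n₂:ℝ)|) (max |(n₃:ℝ)| |(n₄:ℝ)|) + 1) ^ (2 * α - 2))) := by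
          rw [eA, eB]; ring
      _ ≤ -(PhiAlpha α n₁ n₂ n₃ n₄) := by simp only [PhiAlpha]; linarith [h]
      _ ≤ |PhiAlpha α n₁ n₂ n₃ n₄| := neg_le_abs _
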